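/- arXiv:1711.08432 — 3 statements merged into one kernel-verified Lean document; each statement's English description precedes it below -/
import Mathlib

section
/- The map a ↦ Ψ_{n+1}(a)/Ψ_n(a) is strictly increasing on (0,∞), where Ψ_n is the polygamma function of order n. -/
/-!
Write `F_k(x) = ∫_0^∞ tᵏ e^{-xt} / (1 - e^{-t}) dt`, so that `Ψ_{n+1}/Ψ_n = -F_{n+1}/F_n` and
`F_{n+1}(x)/F_n(x)` is the mean of `t` under the positive density `tⁿ e^{-xt} / (1 - e^{-t})`.
For `a < b` the density at `b` is the one at `a` reweighted by the decreasing factor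
`e^{-(b-a)t}`, so its mean is strictly smaller. This is Chebyshev's integral inequality,
proved by symmetrisation: `2 (∫ φu ∫ v - ∫ φv ∫ u)` is the integral over the square of
`(φ t - φ s) (u t v s - v t u s)`, which here is positive off the (null) diagonal.
-/

open MeasureTheory Real Set

namespace MeasureTheory

variable {α : Type*}

def chebyshevKernel (φ u v : α → ℝ) (z : α × α) : ℝ :=
  (φ z.1 - φ z.2) * (u z.1 * v z.2 - v z.1 * u z.2)

theorem chebyshevKernel_eq_sum (φ u v : α → ℝ) :
    chebyshevKernel φ u v = fun z ↦ φ z.1 * u z.1 * v z.2 - φ z.1 * v z.1 * u z.2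
      - u z.1 * (φ z.2 * v z.2) + v z.1 * (φ z.2 * u z.2) := by
  ext z
  unfold chebyshevKernel
  ring

variable [MeasurableSpace α] {μ ν : Measure α}

theorem integral_pos_of_ae_pos (hμ : μ ≠ 0) {f : α → ℝ} (hf : Integrable f μ)
    (h : ∀ᵐ x ∂μ, 0 < f x) : 0 < ∫ x, f x ∂μ := by
  have h_nonneg : 0 ≤ᵐ[μ] f := h.mono fun _ ↦ le_of_lt
  refine (integral_nonneg_of_ae h_nonneg).lt_of_ne fun h_zero ↦ ?_
  have := ae_neBot.2 hμ
  obtain ⟨x, hx_pos, hx_zero⟩ :=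
    (h.and ((integral_eq_zero_iff_of_nonneg_ae h_nonneg hf).1 h_zero.symm)).exists
  exact hx_pos.ne' hx_zero

theorem Measure.prod_ne_zero [SFinite ν] (hμ : μ ≠ 0) (hν : ν ≠ 0) : μ.prod ν ≠ 0 := by
  rw [← Measure.measure_univ_ne_zero, ← univ_prod_univ, Measure.prod_prod]
  exact mul_ne_zero (Measure.measure_univ_ne_zero.2 hμ) (Measure.measure_univ_ne_zero.2 hν)

theorem Measure.ae_prod_self_ne [SFinite μ] [MeasurableEq α] [NullSingletonClass μ] :
    ∀ᵐ z ∂μ.prod μ, z.1 ≠ z.2 :=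
  (Measure.ae_prod_mem_iff_ae_ae_mem measurableSet_diagonal.compl).2 <|
    ae_of_all _ fun t ↦ (μ.ae_ne t).mono fun _ h ↦ Ne.symm h

section Chebyshev

variable {φ u v : α → ℝ}

theorem integrable_chebyshevKernel (hu : Integrable u μ) (hv : Integrable v μ)
    (hφu : Integrable (fun t ↦ φ t * u t) μ) (hφv : Integrable (fun t ↦ φ t * v t) μ) :
    Integrable (chebyshevKernel φ u v) (μ.prod μ) := by
  rw [chebyshevKernel_eq_sum]
  exact (((hφu.mul_prod hv).sub (hφv.mul_prod hu)).sub (hu.mul_prod hφv)).add (hv.mul_prod hφu)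

theorem integral_chebyshevKernel [SFinite μ] (hu : Integrable u μ) (hv : Integrable v μ)
    (hφu : Integrable (fun t ↦ φ t * u t) μ) (hφv : Integrable (fun t ↦ φ t * v t) μ) :
    ∫ z, chebyshevKernel φ u v z ∂μ.prod μ =
      2 * ((∫ t, φ t * u t ∂μ) * ∫ t, v t ∂μ - (∫ t, φ t * v t ∂μ) * ∫ t, u t ∂μ) := by
  have h1 := hφu.mul_prod hv
  have h2 := hφv.mul_prod hu
  have h3 := hu.mul_prod hφv
  simp only [chebyshevKernel_eq_sum]
  rw [integral_add ?_ (hv.mul_prod hφu), integral_sub ?_ h3, integral_sub h1 h2,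
    integral_prod_mul (fun t ↦ φ t * u t) v, integral_prod_mul (fun t ↦ φ t * v t) u,
    integral_prod_mul u (fun t ↦ φ t * v t), integral_prod_mul v (fun t ↦ φ t * u t)]
  · ring
  exacts [h1.sub h2, (h1.sub h2).sub h3]

theorem integral_mul_integral_lt_of_chebyshevKernel_pos [SFinite μ] (hu : Integrable u μ)
    (hv : Integrable v μ) (hφu : Integrable (fun t ↦ φ t * u t) μ)
    (hφv : Integrable (fun t ↦ φ t * v t) μ) (hμ : μ ≠ 0)
    (hK : ∀ᵐ z ∂μ.prod μ, 0 < chebyshevKernel φ u v z) :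
    (∫ t, φ t * v t ∂μ) * ∫ t, u t ∂μ < (∫ t, φ t * u t ∂μ) * ∫ t, v t ∂μ := by
  have h_pos := integral_pos_of_ae_pos (Measure.prod_ne_zero hμ hμ)
    (integrable_chebyshevKernel hu hv hφu hφv) hK
  rw [integral_chebyshevKernel hu hv hφu hφv] at h_pos
  linarith

end Chebyshev

end MeasureTheory

noncomputable def polygammaIntegrand (k : ℕ) (x t : ℝ) : ℝ :=
  t ^ k * exp (-x * t) / (1 - exp (-t))

section Polygamma

variable {k : ℕ} {a b x t s : ℝ}

theorem one_sub_exp_neg_pos (ht : 0 < t) : 0 < 1 - exp (-t) :=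
  sub_pos.2 (exp_lt_one_iff.2 (neg_lt_zero.2 ht))

theorem div_one_sub_exp_neg_le (ht : 0 < t) : t / (1 - exp (-t)) ≤ 1 + t := by
  rw [div_le_iff₀ (one_sub_exp_neg_pos ht)]
  have h_exp : (1 + t) * exp (-t) ≤ 1 :=
    calc (1 + t) * exp (-t) ≤ exp t * exp (-t) := by gcongr; linarith [add_one_le_exp t]
      _ = 1 := by rw [← exp_add, add_neg_cancel, exp_zero]
  nlinarith

theorem polygammaIntegrand_pos (k : ℕ) (x : ℝ) (ht : 0 < t) : 0 < polygammaIntegrand k x t := by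
  have := one_sub_exp_neg_pos ht
  unfold polygammaIntegrand
  positivity

theorem polygammaIntegrand_succ (k : ℕ) (x t : ℝ) :
    polygammaIntegrand (k + 1) x t = t * polygammaIntegrand k x t := by
  simp only [polygammaIntegrand, pow_succ]
  ring

theorem polygammaIntegrand_succ_le (k : ℕ) (x : ℝ) (ht : 0 < t) :
    polygammaIntegrand (k + 1) x t ≤ t ^ k * exp (-x * t) + t ^ (k + 1) * exp (-x * t) :=
  calc polygammaIntegrand (k + 1) x t = t ^ k * exp (-x * t) * (t / (1 - exp (-t))) := by
        simp only [polygammaIntegrand, pow_succ]; ring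
    _ ≤ t ^ k * exp (-x * t) * (1 + t) := by gcongr; exact div_one_sub_exp_neg_le ht
    _ = t ^ k * exp (-x * t) + t ^ (k + 1) * exp (-x * t) := by ring

theorem integrableOn_pow_mul_exp_neg_mul (k : ℕ) (hx : 0 < x) :
    IntegrableOn (fun t ↦ t ^ k * exp (-x * t)) (Ioi 0) := by
  have := integrableOn_rpow_mul_exp_neg_mul_rpow (p := 1) (s := k)
    (by linarith [(Nat.cast_nonneg k : (0 : ℝ) ≤ k)]) zero_lt_one hx
  simpa only [rpow_one, rpow_natCast] using this

theorem integrableOn_polygammaIntegrand (hk : k ≠ 0) (hx : 0 < x) :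
    IntegrableOn (polygammaIntegrand k x) (Ioi 0) := by
  obtain ⟨k, rfl⟩ := Nat.exists_eq_succ_of_ne_zero hk
  refine ((integrableOn_pow_mul_exp_neg_mul k hx).add
    (integrableOn_pow_mul_exp_neg_mul (k + 1) hx)).mono'
    (Measurable.aestronglyMeasurable (by unfold polygammaIntegrand; fun_prop)) ?_
  filter_upwards [ae_restrict_mem measurableSet_Ioi] with t ht
  rw [norm_of_nonneg (polygammaIntegrand_pos _ _ ht).le]
  exact polygammaIntegrand_succ_le k x ht

theorem integral_polygammaIntegrand_pos (hk : k ≠ 0) (hx : 0 < x) :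
    0 < ∫ t in Ioi 0, polygammaIntegrand k x t :=
  integral_pos_of_ae_pos (by simp) (integrableOn_polygammaIntegrand hk hx)
    ((ae_restrict_mem measurableSet_Ioi).mono fun _ ht ↦ polygammaIntegrand_pos k x ht)

theorem chebyshevKernel_polygammaIntegrand_pos (k : ℕ) (hab : a < b) (ht : 0 < t) (hs : 0 < s)
    (hts : t ≠ s) :
    0 < chebyshevKernel id (polygammaIntegrand k a) (polygammaIntegrand k b) (t, s) := by
  have h_factor : chebyshevKernel id (polygammaIntegrand k a) (polygammaIntegrand k b) (t, s) =
      t ^ k / (1 - exp (-t)) * (s ^ k / (1 - exp (-s))) *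
        ((t - s) * (exp (-a * t + -b * s) - exp (-b * t + -a * s))) := by
    rw [exp_add, exp_add]
    simp only [chebyshevKernel, polygammaIntegrand, id]
    ring
  -- the two exponents differ by `(b - a) (t - s)`
  have h_sign : 0 < (t - s) * (exp (-a * t + -b * s) - exp (-b * t + -a * s)) := by
    rcases hts.lt_or_gt with h | h
    · exact mul_pos_of_neg_of_neg (sub_neg.2 h) (sub_neg.2 (exp_lt_exp.2 (by nlinarith)))
    · exact mul_pos (sub_pos.2 h) (sub_pos.2 (exp_lt_exp.2 (by nlinarith)))
  have := one_sub_exp_neg_pos ht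
  have := one_sub_exp_neg_pos hs
  rw [h_factor]
  positivity

theorem ae_pos_pos_ne_volume_Ioi_prod :
    ∀ᵐ z ∂(volume.restrict (Ioi (0 : ℝ))).prod (volume.restrict (Ioi 0)),
      0 < z.1 ∧ 0 < z.2 ∧ z.1 ≠ z.2 := by
  filter_upwards [Measure.quasiMeasurePreserving_fst.ae (ae_restrict_mem measurableSet_Ioi),
    Measure.quasiMeasurePreserving_snd.ae (ae_restrict_mem measurableSet_Ioi),
    Measure.ae_prod_self_ne] with z ht hs hts
  exact ⟨ht, hs, hts⟩

theorem integral_polygammaIntegrand_succ_mul_lt (hk : k ≠ 0) (ha : 0 < a) (hab : a < b) :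
    (∫ t in Ioi 0, polygammaIntegrand (k + 1) b t) * ∫ t in Ioi 0, polygammaIntegrand k a t <
      (∫ t in Ioi 0, polygammaIntegrand (k + 1) a t) * ∫ t in Ioi 0, polygammaIntegrand k b t := by
  have h_int_succ {x : ℝ} (hx : 0 < x) :
      IntegrableOn (fun t ↦ id t * polygammaIntegrand k x t) (Ioi 0) :=
    (integrableOn_polygammaIntegrand k.succ_ne_zero hx).congr_fun
      (fun t _ ↦ polygammaIntegrand_succ k x t) measurableSet_Ioi
  simp only [polygammaIntegrand_succ]
  refine integral_mul_integral_lt_of_chebyshevKernel_pos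
    (integrableOn_polygammaIntegrand hk ha) (integrableOn_polygammaIntegrand hk (ha.trans hab))
    (h_int_succ ha) (h_int_succ (ha.trans hab)) (by simp) ?_
  filter_upwards [ae_pos_pos_ne_volume_Ioi_prod] with z ⟨ht, hs, hts⟩
  exact chebyshevKernel_polygammaIntegrand_pos k hab ht hs hts

theorem strictAntiOn_integral_polygammaIntegrand_succ_div (hk : k ≠ 0) :
    StrictAntiOn (fun x ↦ (∫ t in Ioi 0, polygammaIntegrand (k + 1) x t) /
      ∫ t in Ioi 0, polygammaIntegrand k x t) (Ioi 0) := by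
  intro a ha b hb hab
  rw [div_lt_div_iff₀ (integral_polygammaIntegrand_pos hk hb)
    (integral_polygammaIntegrand_pos hk ha)]
  exact integral_polygammaIntegrand_succ_mul_lt hk ha hab

end Polygamma

/-- The map `a ↦ Ψ_{n+1}(a)/Ψ_n(a)` is strictly increasing on `(0,∞)`,
where `Ψ n` is the polygamma function of order `n`, characterized by its integral
representation `Ψ_n(x) = (-1)^{n+1} ∫_0^∞ tⁿ e^{-xt}/(1-e^{-t}) dt` for `x > 0`. -/
theorem stmt_0
    (Ψ : ℕ → ℝ → ℝ)
    (hΨ : ∀ (k : ℕ) (x : ℝ), 1 ≤ k → 0 < x →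
      Ψ k x = (-1 : ℝ) ^ (k + 1) *
        ∫ t in Set.Ioi (0 : ℝ), t ^ k * Real.exp (-x * t) / (1 - Real.exp (-t)))
    (n : ℕ) (hn : 1 ≤ n) :
    StrictMonoOn (fun a => Ψ (n + 1) a / Ψ n a) (Set.Ioi (0 : ℝ)) := by
  have hΨ_ratio : EqOn (fun a => Ψ (n + 1) a / Ψ n a) (fun x ↦ -((∫ t in Ioi 0,
      polygammaIntegrand (n + 1) x t) / ∫ t in Ioi 0, polygammaIntegrand n x t)) (Ioi 0) := by
    intro x hx
    have hΨ_x (k : ℕ) (hk : 1 ≤ k) :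
        Ψ k x = (-1) ^ (k + 1) * ∫ t in Ioi 0, polygammaIntegrand k x t := hΨ k x hk hx
    simp only [hΨ_x (n + 1) (by omega), hΨ_x n hn, pow_succ]
    field_simp
  intro a ha b hb hab
  rw [hΨ_ratio ha, hΨ_ratio hb, neg_lt_neg_iff]
  exact strictAntiOn_integral_polygammaIntegrand_succ_div (by omega) ha hb hab
end

section
/- For the beta-type function f(x) = (1-x)^{b-1} 1_{(0,1)}(x) with b > 0, and a in a compact subset K of (0,∞), there is a constant C = C(K,b) such that L^f(a,x) ≤ C(1 + |log x|) for all x ∈ (0,1), where L^f(a,x) = (x^{-a}/f(x)) ∫_0^x (ψ_0^f(a) - log y) y^{a-1} f(y) dy and ψ_0^f(a) = (d/da) log M_f(a). -/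
open MeasureTheory

/-- The Mellin transform `M_f(a) = ∫_0^∞ x^{a-1} f(x) dx` (as an extended real). -/
noncomputable def mellinP (f : ℝ → ℝ) (a : ℝ) : ENNReal :=
  ∫⁻ x in Set.Ioi (0 : ℝ), ENNReal.ofReal (x ^ (a - 1) * f x)

/-- `ψ_0^f(a) = (d/da) log M_f(a)`. -/
noncomputable def psi0 (f : ℝ → ℝ) (a : ℝ) : ℝ :=
  deriv (fun b => Real.log ((mellinP f b).toReal)) a

/-- `L^f(a,x) = (x^{-a}/f(x)) ∫_0^x (ψ_0^f(a) - log y) y^{a-1} f(y) dy`. -/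
noncomputable def Lf (f : ℝ → ℝ) (a x : ℝ) : ℝ :=
  x ^ (-a) / f x * ∫ y in Set.Ioo (0 : ℝ) x, (psi0 f a - Real.log y) * y ^ (a - 1) * f y

/-! With `K_a(y) = y^(a-1) (1-y)^(b-1)` and `B(a) = ∫₀¹ K_a`, the Mellin transform of `f` is
`B`, and differentiating under the integral sign gives `ψ(a) = (∫₀¹ log y · K_a) / B(a)`. Hence
`ψ(a) ≤ 0` and `∫₀¹ (ψ(a) - log y) K_a(y) dy = 0`.

For `x ≤ 1/2` drop `ψ`, bound `(1-y)^(b-1)` by a constant and use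
`-log y ≤ -log x + (2/a) (x/y)^(a/2)`: integrating the two powers of `y` gives
`x^a (-log x / a + 4 / a²)`. For `x ≥ 1/2` the cancellation turns `∫₀ˣ` into
`∫ₓ¹ (log y - ψ) K_a ≤ -2ψ (1-x)^b / b`, which absorbs the factor `(1-x)^(1-b)`.

Uniformity over `a ∈ K ⊆ [a₀, a₁]` comes from `K_a` decreasing in `a`:
`-ψ(a) ≤ -(∫₀¹ log y · K_{a₀}) / B(a₁)`. -/

open Set Real

lemma neg_log_le_rpow_neg_mul_one_sub {y s : ℝ} (hy : 0 < y) (hy1 : y ≤ 1) (hs : 0 < s)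
    (hs1 : s ≤ 1) : -log y ≤ y ^ (-s) * (1 - y) / s := by
  have hlog : -s * log y ≤ y ^ (-s) - 1 := by
    rw [← log_rpow hy]; exact log_le_sub_one_of_pos (rpow_pos_of_pos hy _)
  have hys : y ≤ y ^ s := by simpa using rpow_le_rpow_of_exponent_ge hy hy1 hs1
  have hinv : y ^ (-s) * y ^ s = 1 := by rw [← rpow_add hy]; simp
  rw [le_div_iff₀ hs]
  nlinarith [rpow_pos_of_pos hy (-s)]

lemma neg_log_le_neg_log_add_rpow {x y s : ℝ} (hx : 0 < x) (hy : 0 < y) (hs : 0 < s) :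
    -log y ≤ -log x + s⁻¹ * x ^ s * y ^ (-s) := by
  have h := log_le_rpow_div (div_pos hx hy).le hs
  rw [log_div hx.ne' hy.ne', div_rpow hx.le hy.le] at h
  rw [rpow_neg hy.le]
  field_simp at h ⊢
  linarith

lemma rpow_le_two_rpow_abs {t p : ℝ} (ht : 1 / 2 ≤ t) (ht1 : t ≤ 1) : t ^ p ≤ 2 ^ |p| := by
  have ht0 : 0 < t := by linarith
  calc t ^ p = t⁻¹ ^ (-p) := by rw [inv_rpow ht0.le, rpow_neg ht0.le, inv_inv]
    _ ≤ t⁻¹ ^ |p| := rpow_le_rpow_of_exponent_le ((one_le_inv₀ ht0).2 ht1) (neg_le_abs p)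
    _ ≤ 2 ^ |p| := rpow_le_rpow (by positivity) (by rw [inv_le_comm₀ ht0 two_pos]; linarith)
        (abs_nonneg p)

lemma integral_Ioo_rpow_sub_one {c x : ℝ} (hc : 0 < c) (hx : 0 ≤ x) :
    ∫ y in Ioo 0 x, y ^ (c - 1) = x ^ c / c := by
  rw [← integral_Ioc_eq_integral_Ioo, ← intervalIntegral.integral_of_le hx,
    integral_rpow (Or.inl (by linarith)), sub_add_cancel, zero_rpow hc.ne', sub_zero]

lemma integral_Ioo_one_sub_rpow_sub_one {b x : ℝ} (hb : 0 < b) (hx : x ≤ 1) :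
    ∫ y in Ioo x 1, (1 - y) ^ (b - 1) = (1 - x) ^ b / b := by
  rw [← integral_Ioc_eq_integral_Ioo, ← intervalIntegral.integral_of_le hx,
    intervalIntegral.integral_comp_sub_left (fun y => y ^ (b - 1)), sub_self,
    integral_rpow (Or.inl (by linarith)), sub_add_cancel, zero_rpow hb.ne', sub_zero]

lemma integral_Ioo_left_eq_neg_integral_Ioo_right {f : ℝ → ℝ} {a b x : ℝ}
    (hf : IntegrableOn f (Ioo a b)) (h : ∫ y in Ioo a b, f y = 0) (hax : a ≤ x) (hxb : x < b) :
    ∫ y in Ioo a x, f y = -∫ y in Ioo x b, f y := by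
  rw [← integral_Ioc_eq_integral_Ioo, eq_neg_iff_add_eq_zero, ← setIntegral_union
    (disjoint_left.2 fun y h₁ h₂ => lt_irrefl _ (h₂.1.trans_le h₁.2)) measurableSet_Ioo
    (hf.mono_set (Ioc_subset_Ioo_right hxb)) (hf.mono_set (Ioo_subset_Ioo_left hax)),
    Ioc_union_Ioo_eq_Ioo hax hxb, h]

lemma IsCompact.exists_subset_Icc_of_subset_Ioi {K : Set ℝ} (hK : IsCompact K)
    (hKpos : K ⊆ Ioi 0) : ∃ a₀ a₁ : ℝ, 0 < a₀ ∧ K ⊆ Icc a₀ a₁ := by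
  rcases K.eq_empty_or_nonempty with rfl | hne
  · exact ⟨1, 1, one_pos, empty_subset _⟩
  · exact ⟨sInf K, sSup K, hKpos (hK.sInf_mem hne), hK.isBounded.subset_Icc_sInf_sSup⟩

noncomputable def betaKernel (a b y : ℝ) : ℝ := y ^ (a - 1) * (1 - y) ^ (b - 1)

section BetaKernel

variable {a b y : ℝ}

lemma betaKernel_pos (hy : y ∈ Ioo (0 : ℝ) 1) : 0 < betaKernel a b y :=
  mul_pos (rpow_pos_of_pos hy.1 _) (rpow_pos_of_pos (sub_pos.2 hy.2) _)

lemma betaKernel_le_of_le {a' : ℝ} (hy : y ∈ Ioo (0 : ℝ) 1) (h : a ≤ a') :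
    betaKernel a' b y ≤ betaKernel a b y :=
  mul_le_mul_of_nonneg_right (rpow_le_rpow_of_exponent_ge hy.1 hy.2.le (by linarith))
    (rpow_nonneg (sub_pos.2 hy.2).le _)

lemma continuousOn_betaKernel (a b : ℝ) : ContinuousOn (betaKernel a b) (Ioo 0 1) :=
  (continuousOn_id.rpow_const fun _ hy => Or.inl hy.1.ne').mul
    ((continuousOn_const.sub continuousOn_id).rpow_const fun _ hy => Or.inl (sub_pos.2 hy.2).ne')

lemma continuousOn_log_mul_betaKernel (a b : ℝ) :
    ContinuousOn (fun y => log y * betaKernel a b y) (Ioo 0 1) :=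
  (continuousOn_log.mono fun _ hy => hy.1.ne').mul (continuousOn_betaKernel a b)

lemma integrableOn_betaKernel (ha : 0 < a) (hb : 0 < b) :
    IntegrableOn (betaKernel a b) (Ioo 0 1) := by
  have h := (Complex.betaIntegral_convergent (u := a) (v := b) (by simpa) (by simpa)).norm
  rw [intervalIntegrable_iff_integrableOn_Ioo_of_le zero_le_one] at h
  refine h.congr_fun (fun y hy => ?_) measurableSet_Ioo
  have h1y : (1 : ℂ) - y = ((1 - y : ℝ) : ℂ) := by push_cast; ring
  show ‖_ * _‖ = _
  rw [norm_mul, h1y, Complex.norm_cpow_eq_rpow_re_of_pos hy.1,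
    Complex.norm_cpow_eq_rpow_re_of_pos (sub_pos.2 hy.2)]
  simp [betaKernel]

lemma abs_log_mul_betaKernel_le {s : ℝ} (hy : y ∈ Ioo (0 : ℝ) 1) (hs : 0 < s)
    (hs1 : s ≤ 1) :
    |log y| * betaKernel a b y ≤ s⁻¹ * betaKernel (a - s) (b + 1) y := by
  have hsplit :
      s⁻¹ * betaKernel (a - s) (b + 1) y = y ^ (-s) * (1 - y) / s * betaKernel a b y := by
    rw [betaKernel, betaKernel, show a - s - 1 = -s + (a - 1) by ring, rpow_add hy.1,
      show b + 1 - 1 = 1 + (b - 1) by ring, rpow_add (sub_pos.2 hy.2), rpow_one]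
    field_simp
  rw [hsplit, abs_of_nonpos (log_nonpos hy.1.le hy.2.le)]
  exact mul_le_mul_of_nonneg_right (neg_log_le_rpow_neg_mul_one_sub hy.1 hy.2.le hs hs1)
    (betaKernel_pos hy).le

lemma integrableOn_log_mul_betaKernel (ha : 0 < a) (hb : 0 < b) :
    IntegrableOn (fun y => log y * betaKernel a b y) (Ioo 0 1) := by
  set s := min 1 (a / 2)
  have hs : 0 < s := lt_min one_pos (half_pos ha)
  have hdom := (integrableOn_betaKernel (a := a - s) (b := b + 1)
    (by linarith [min_le_right 1 (a / 2)]) (by linarith)).const_mul s⁻¹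
  refine hdom.mono' ((continuousOn_log_mul_betaKernel a b).aestronglyMeasurable measurableSet_Ioo)
    (ae_restrict_of_forall_mem measurableSet_Ioo fun y hy => ?_)
  rw [norm_mul, norm_of_nonneg (betaKernel_pos hy).le, norm_eq_abs]
  exact abs_log_mul_betaKernel_le hy hs (min_le_left _ _)

lemma integrableOn_sub_log_mul_betaKernel (ha : 0 < a) (hb : 0 < b) (c : ℝ) :
    IntegrableOn (fun y => (c - log y) * betaKernel a b y) (Ioo 0 1) := by
  simp_rw [sub_mul]
  exact ((integrableOn_betaKernel ha hb).const_mul c).sub (integrableOn_log_mul_betaKernel ha hb)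

lemma hasDerivAt_betaKernel_left (hy : 0 < y) :
    HasDerivAt (fun t => betaKernel t b y) (log y * betaKernel a b y) a := by
  have h := (((hasDerivAt_id a).sub_const 1).const_rpow hy).mul_const ((1 - y) ^ (b - 1))
  exact h.congr_deriv (by simp only [betaKernel, id, mul_one]; ring)

end BetaKernel

noncomputable def realBeta (a b : ℝ) : ℝ := ∫ y in Ioo (0 : ℝ) 1, betaKernel a b y

section RealBeta

variable {a b : ℝ}

lemma realBeta_pos (ha : 0 < a) (hb : 0 < b) : 0 < realBeta a b := by
  rw [realBeta, setIntegral_pos_iff_support_of_nonneg_ae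
    (ae_restrict_of_forall_mem measurableSet_Ioo fun y hy => (betaKernel_pos hy).le)
    (integrableOn_betaKernel ha hb)]
  rw [inter_eq_right.2 fun y hy => Function.mem_support.2 (betaKernel_pos hy).ne']
  simp

lemma realBeta_le_of_le {a' : ℝ} (ha : 0 < a) (hb : 0 < b) (h : a ≤ a') :
    realBeta a' b ≤ realBeta a b :=
  setIntegral_mono_on (integrableOn_betaKernel (ha.trans_le h) hb) (integrableOn_betaKernel ha hb)
    measurableSet_Ioo fun _ hy => betaKernel_le_of_le hy h

lemma setIntegral_log_mul_betaKernel_nonpos (a b : ℝ) :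
    ∫ y in Ioo (0 : ℝ) 1, log y * betaKernel a b y ≤ 0 :=
  setIntegral_nonpos measurableSet_Ioo fun _ hy =>
    mul_nonpos_of_nonpos_of_nonneg (log_nonpos hy.1.le hy.2.le) (betaKernel_pos hy).le

lemma hasDerivAt_realBeta_left (ha : 0 < a) (hb : 0 < b) :
    HasDerivAt (fun t => realBeta t b) (∫ y in Ioo (0 : ℝ) 1, log y * betaKernel a b y) a := by
  have ha2 : 0 < a / 2 := half_pos ha
  refine (hasDerivAt_integral_of_dominated_loc_of_deriv_le
    (F' := fun t y => log y * betaKernel t b y) (Metric.ball_mem_nhds a ha2)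
    (Filter.Eventually.of_forall fun t =>
      (continuousOn_betaKernel t b).aestronglyMeasurable measurableSet_Ioo)
    (integrableOn_betaKernel ha hb)
    ((continuousOn_log_mul_betaKernel a b).aestronglyMeasurable measurableSet_Ioo)
    ?_ (integrableOn_log_mul_betaKernel ha2 hb).norm ?_).2
  · refine ae_restrict_of_forall_mem measurableSet_Ioo fun y hy t ht => ?_
    have hat : a / 2 ≤ t := by
      linarith [(abs_lt.1 (by simpa [Metric.mem_ball, Real.dist_eq] using ht)).1]
    rw [norm_mul, norm_mul, norm_of_nonneg (betaKernel_pos hy).le,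
      norm_of_nonneg (betaKernel_pos hy).le]
    exact mul_le_mul_of_nonneg_left (betaKernel_le_of_le hy hat) (norm_nonneg _)
  · exact ae_restrict_of_forall_mem measurableSet_Ioo fun y hy t _ =>
      hasDerivAt_betaKernel_left hy.1

end RealBeta

noncomputable def betaWeight (b : ℝ) : ℝ → ℝ :=
  (Ioo (0 : ℝ) 1).indicator fun x => (1 - x) ^ (b - 1)

section BetaWeight

variable {a b : ℝ}

lemma mellinP_betaWeight (ha : 0 < a) (hb : 0 < b) :
    mellinP (betaWeight b) a = ENNReal.ofReal (realBeta a b) := by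
  have hind : ∀ x : ℝ, ENNReal.ofReal (x ^ (a - 1) * betaWeight b x)
      = (Ioo (0 : ℝ) 1).indicator (fun y => ENNReal.ofReal (betaKernel a b y)) x := by
    intro x
    by_cases hx : x ∈ Ioo (0 : ℝ) 1
    · simp [betaWeight, indicator_of_mem hx, betaKernel]
    · simp [betaWeight, indicator_of_notMem hx]
  rw [mellinP, realBeta, ofReal_integral_eq_lintegral_ofReal (integrableOn_betaKernel ha hb)
    (ae_restrict_of_forall_mem measurableSet_Ioo fun y hy => (betaKernel_pos hy).le)]
  simp_rw [hind]
  rw [lintegral_indicator measurableSet_Ioo, Measure.restrict_restrict measurableSet_Ioo,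
    inter_eq_left.2 Ioo_subset_Ioi_self]

lemma psi0_betaWeight (ha : 0 < a) (hb : 0 < b) :
    psi0 (betaWeight b) a
      = (∫ y in Ioo (0 : ℝ) 1, log y * betaKernel a b y) / realBeta a b := by
  have hM : (fun t => log (mellinP (betaWeight b) t).toReal) =ᶠ[nhds a]
      fun t => log (realBeta t b) := by
    filter_upwards [Ioi_mem_nhds ha] with t ht
    rw [mellinP_betaWeight ht hb, ENNReal.toReal_ofReal (realBeta_pos ht hb).le]
  rw [psi0, hM.deriv_eq]
  exact ((hasDerivAt_realBeta_left ha hb).log (realBeta_pos ha hb).ne').deriv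

lemma psi0_betaWeight_nonpos (ha : 0 < a) (hb : 0 < b) : psi0 (betaWeight b) a ≤ 0 := by
  rw [psi0_betaWeight ha hb]
  exact div_nonpos_of_nonpos_of_nonneg (setIntegral_log_mul_betaKernel_nonpos a b)
    (realBeta_pos ha hb).le

lemma neg_psi0_betaWeight_le {a₀ a₁ : ℝ} (ha₀ : 0 < a₀) (h₀ : a₀ ≤ a) (h₁ : a ≤ a₁)
    (hb : 0 < b) :
    -psi0 (betaWeight b) a
      ≤ -(∫ y in Ioo (0 : ℝ) 1, log y * betaKernel a₀ b y) / realBeta a₁ b := by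
  have ha := ha₀.trans_le h₀
  have hlog : ∫ y in Ioo (0 : ℝ) 1, log y * betaKernel a₀ b y
      ≤ ∫ y in Ioo (0 : ℝ) 1, log y * betaKernel a b y :=
    setIntegral_mono_on (integrableOn_log_mul_betaKernel ha₀ hb)
      (integrableOn_log_mul_betaKernel ha hb) measurableSet_Ioo fun y hy =>
        mul_le_mul_of_nonpos_left (betaKernel_le_of_le hy h₀) (log_nonpos hy.1.le hy.2.le)
  rw [psi0_betaWeight ha hb, ← neg_div]
  exact div_le_div₀ (neg_nonneg.2 (setIntegral_log_mul_betaKernel_nonpos a₀ b))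
    (neg_le_neg hlog)
    (realBeta_pos (ha.trans_le h₁) hb) (realBeta_le_of_le ha hb h₁)

lemma integral_psi0_sub_log_mul_betaKernel (ha : 0 < a) (hb : 0 < b) :
    ∫ y in Ioo (0 : ℝ) 1, (psi0 (betaWeight b) a - log y) * betaKernel a b y = 0 := by
  simp_rw [sub_mul]
  rw [integral_sub ((integrableOn_betaKernel ha hb).const_mul _)
    (integrableOn_log_mul_betaKernel ha hb), integral_const_mul, psi0_betaWeight ha hb,
    ← realBeta, div_mul_cancel₀ _ (realBeta_pos ha hb).ne', sub_self]

lemma Lf_betaWeight {x : ℝ} (hx : x ∈ Ioo (0 : ℝ) 1) :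
    Lf (betaWeight b) a x = x ^ (-a) / (1 - x) ^ (b - 1) *
      ∫ y in Ioo (0 : ℝ) x, (psi0 (betaWeight b) a - log y) * betaKernel a b y := by
  rw [Lf, betaWeight, indicator_of_mem hx]
  congr 1
  refine setIntegral_congr_fun measurableSet_Ioo fun y hy => ?_
  rw [indicator_of_mem (show y ∈ Ioo (0 : ℝ) 1 from ⟨hy.1, hy.2.trans hx.2⟩), betaKernel,
    mul_assoc]

end BetaWeight

section Bounds

variable {a b c x : ℝ}

lemma setIntegral_sub_log_mul_betaKernel_le_of_le_half (ha : 0 < a) (hb : 0 < b) (hc : c ≤ 0)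
    (hx : 0 < x) (hx2 : x ≤ 1 / 2) :
    ∫ y in Ioo 0 x, (c - log y) * betaKernel a b y
      ≤ 2 ^ |b - 1| * (x ^ a * (-log x / a + 4 / a ^ 2)) := by
  have hsub : Ioo 0 x ⊆ Ioo (0 : ℝ) 1 := Ioo_subset_Ioo_right (by linarith)
  have hlogx : 0 ≤ -log x := neg_nonneg.2 (log_nonpos hx.le (by linarith))
  set φ : ℝ → ℝ := fun y =>
    2 ^ |b - 1| * (-log x * y ^ (a - 1) + 2 / a * x ^ (a / 2) * y ^ (a / 2 - 1))
  have hint (p : ℝ) (hp : 0 < p) : IntegrableOn (fun y : ℝ => y ^ (p - 1)) (Ioo 0 x) :=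
    (intervalIntegral.integrableOn_Ioo_rpow_iff hx).2 (by linarith)
  have hφ : ∫ y in Ioo 0 x, φ y = 2 ^ |b - 1| * (x ^ a * (-log x / a + 4 / a ^ 2)) := by
    rw [integral_const_mul, integral_add ((hint a ha).const_mul _)
      ((hint _ (half_pos ha)).const_mul _), integral_const_mul, integral_const_mul,
      integral_Ioo_rpow_sub_one ha hx.le, integral_Ioo_rpow_sub_one (half_pos ha) hx.le]
    have hxx : x ^ (a / 2) * x ^ (a / 2) = x ^ a := by rw [← rpow_add hx]; ring_nf
    field_simp
    rw [← hxx]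
    ring
  rw [← hφ]
  refine setIntegral_mono_on ((integrableOn_sub_log_mul_betaKernel ha hb c).mono_set hsub)
    (((hint a ha).const_mul _).add ((hint _ (half_pos ha)).const_mul _) |>.const_mul _)
    measurableSet_Ioo fun y hy => ?_
  have hlog := neg_log_le_neg_log_add_rpow hx hy.1 (half_pos ha)
  rw [inv_div] at hlog
  have hpow : y ^ (-(a / 2)) * y ^ (a - 1) = y ^ (a / 2 - 1) := by
    rw [← rpow_add hy.1]; ring_nf
  have hK : (1 - y) ^ (b - 1) ≤ 2 ^ |b - 1| :=
    rpow_le_two_rpow_abs (by linarith [hy.2]) (by linarith [hy.1])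
  have hS : 0 ≤ -log x * y ^ (a - 1) + 2 / a * x ^ (a / 2) * y ^ (a / 2 - 1) :=
    add_nonneg (mul_nonneg hlogx (rpow_nonneg hy.1.le _))
      (mul_nonneg (mul_nonneg (div_nonneg zero_le_two ha.le) (rpow_nonneg hx.le _))
        (rpow_nonneg hy.1.le _))
  calc (c - log y) * betaKernel a b y
      ≤ (-log x + 2 / a * x ^ (a / 2) * y ^ (-(a / 2))) * betaKernel a b y :=
        mul_le_mul_of_nonneg_right (by linarith) (betaKernel_pos (hsub hy)).le
    _ = (1 - y) ^ (b - 1) * (-log x * y ^ (a - 1) + 2 / a * x ^ (a / 2) * y ^ (a / 2 - 1)) := by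
        rw [betaKernel, ← hpow]; ring
    _ ≤ φ y := mul_le_mul_of_nonneg_right hK hS

lemma setIntegral_sub_log_mul_betaKernel_le_of_half_le (ha : 0 < a) (hb : 0 < b) (hc : c ≤ 0)
    (hc₀ : ∫ y in Ioo (0 : ℝ) 1, (c - log y) * betaKernel a b y = 0)
    (hx2 : 1 / 2 ≤ x) (hx1 : x < 1) :
    ∫ y in Ioo 0 x, (c - log y) * betaKernel a b y ≤ 2 * -c * ((1 - x) ^ b / b) := by
  have hx : 0 < x := by linarith
  have hint := integrableOn_sub_log_mul_betaKernel ha hb c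
  have hsub : Ioo x 1 ⊆ Ioo (0 : ℝ) 1 := Ioo_subset_Ioo_left hx.le
  have hone : IntegrableOn (fun y => (1 - y) ^ (b - 1)) (Ioo x 1) := by
    have h := (integrableOn_betaKernel one_pos hb).mono_set hsub
    rwa [show betaKernel 1 b = fun y => (1 - y) ^ (b - 1) by ext; simp [betaKernel]] at h
  rw [integral_Ioo_left_eq_neg_integral_Ioo_right hint hc₀ hx.le hx1, ← integral_neg,
    ← integral_Ioo_one_sub_rpow_sub_one hb hx1.le, ← integral_const_mul]
  refine setIntegral_mono_on (hint.mono_set hsub).neg (hone.const_mul _) measurableSet_Ioo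
    fun y hy => ?_
  have hy0 : 0 < y := hx.trans hy.1
  have hpow : y ^ (a - 1) ≤ 2 := by
    refine (rpow_le_rpow_of_exponent_ge hy0 hy.2.le (by linarith : -1 ≤ a - 1)).trans ?_
    rw [rpow_neg_one, inv_le_comm₀ hy0 two_pos]
    linarith [hy.1]
  have hlogK := mul_nonpos_of_nonpos_of_nonneg (log_nonpos hy0.le hy.2.le)
    (betaKernel_pos (a := a) (b := b) (hsub hy)).le
  have hc' : 0 ≤ -c := by linarith
  calc -((c - log y) * betaKernel a b y) ≤ -c * betaKernel a b y := by linarith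
    _ = -c * (1 - y) ^ (b - 1) * y ^ (a - 1) := by rw [betaKernel]; ring
    _ ≤ -c * (1 - y) ^ (b - 1) * 2 :=
        mul_le_mul_of_nonneg_left hpow (mul_nonneg hc' (rpow_nonneg (by linarith [hy.2]) _))
    _ = 2 * -c * (1 - y) ^ (b - 1) := by ring

lemma Lf_betaWeight_le_of_le_half (ha : 0 < a) (hb : 0 < b) (hx : 0 < x) (hx2 : x ≤ 1 / 2) :
    Lf (betaWeight b) a x ≤ (2 ^ |b - 1|) ^ 2 * (1 / a + 4 / a ^ 2) * (1 + |log x|) := by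
  have h1x : 0 < 1 - x := by linarith
  have hlog : |log x| = -log x := abs_of_nonpos (log_nonpos hx.le (by linarith))
  have hQ : 0 ≤ -log x / a + 4 / a ^ 2 := by rw [← hlog]; positivity
  rw [Lf_betaWeight ⟨hx, by linarith⟩]
  calc x ^ (-a) / (1 - x) ^ (b - 1) *
        ∫ y in Ioo 0 x, (psi0 (betaWeight b) a - log y) * betaKernel a b y
      ≤ x ^ (-a) / (1 - x) ^ (b - 1) * (2 ^ |b - 1| * (x ^ a * (-log x / a + 4 / a ^ 2))) :=
        mul_le_mul_of_nonneg_left (setIntegral_sub_log_mul_betaKernel_le_of_le_half ha hb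
          (psi0_betaWeight_nonpos ha hb) hx hx2) (by positivity)
    _ = (1 - x) ^ (-(b - 1)) * 2 ^ |b - 1| * (-log x / a + 4 / a ^ 2) := by
        rw [rpow_neg hx.le, rpow_neg h1x.le]
        field_simp
    _ ≤ 2 ^ |b - 1| * 2 ^ |b - 1| * (-log x / a + 4 / a ^ 2) := by
        gcongr
        simpa [abs_sub_comm] using
          rpow_le_two_rpow_abs (t := 1 - x) (p := -(b - 1)) (by linarith) (by linarith)
    _ ≤ (2 ^ |b - 1|) ^ 2 * (1 / a + 4 / a ^ 2) * (1 + |log x|) := by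
        rw [← sq, mul_assoc]
        gcongr
        rw [← hlog, show (1 / a + 4 / a ^ 2) * (1 + |log x|)
          = |log x| / a + 4 / a ^ 2 + (1 / a + 4 / a ^ 2 * |log x|) by ring]
        exact le_add_of_nonneg_right (by positivity)

lemma Lf_betaWeight_le_of_half_le (ha : 0 < a) (hb : 0 < b) (hx2 : 1 / 2 ≤ x) (hx1 : x < 1) :
    Lf (betaWeight b) a x ≤ 2 ^ a * (2 * -psi0 (betaWeight b) a / b) := by
  have hx : 0 < x := by linarith
  have h1x : 0 < 1 - x := by linarith
  have hψ := psi0_betaWeight_nonpos ha hb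
  rw [Lf_betaWeight ⟨hx, hx1⟩]
  calc x ^ (-a) / (1 - x) ^ (b - 1) *
        ∫ y in Ioo 0 x, (psi0 (betaWeight b) a - log y) * betaKernel a b y
      ≤ x ^ (-a) / (1 - x) ^ (b - 1) * (2 * -psi0 (betaWeight b) a * ((1 - x) ^ b / b)) :=
        mul_le_mul_of_nonneg_left (setIntegral_sub_log_mul_betaKernel_le_of_half_le ha hb hψ
          (integral_psi0_sub_log_mul_betaKernel ha hb) hx2 hx1) (by positivity)
    _ = x ^ (-a) * (1 - x) * (2 * -psi0 (betaWeight b) a / b) := by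
        rw [rpow_sub_one h1x.ne']
        field_simp
    _ ≤ 2 ^ a * (2 * -psi0 (betaWeight b) a / b) := by
        refine mul_le_mul_of_nonneg_right ?_ (div_nonneg (by linarith) hb.le)
        refine (mul_le_of_le_one_right (rpow_nonneg hx.le _) (by linarith)).trans ?_
        simpa [abs_of_pos ha] using rpow_le_two_rpow_abs (p := -a) hx2 hx1.le

end Bounds

/-- for the beta-type function `f(x) = (1-x)^{b-1} 1_{(0,1)}(x)` with
`b > 0` and `a` ranging in a compact `K ⊆ (0,∞)`, there is `C = C(K,b)` with
`L^f(a,x) ≤ C(1 + |log x|)` for all `x ∈ (0,1)`. -/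
theorem stmt_9
    (b : ℝ) (hb : 0 < b)
    (f : ℝ → ℝ)
    (hf : f = Set.indicator (Set.Ioo (0 : ℝ) 1) (fun x => (1 - x) ^ (b - 1)))
    (K : Set ℝ) (hK : IsCompact K) (hKsub : K ⊆ Set.Ioi (0 : ℝ)) :
    ∃ C : ℝ, ∀ a ∈ K, ∀ x ∈ Set.Ioo (0 : ℝ) 1,
      Lf f a x ≤ C * (1 + |Real.log x|) := by
  obtain rfl : f = betaWeight b := hf
  obtain ⟨a₀, a₁, ha₀, hKI⟩ := hK.exists_subset_Icc_of_subset_Ioi hKsub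
  set M := -(∫ y in Ioo (0 : ℝ) 1, log y * betaKernel a₀ b y) / realBeta a₁ b
  refine ⟨max ((2 ^ |b - 1|) ^ 2 * (1 / a₀ + 4 / a₀ ^ 2)) (2 ^ a₁ * (2 * M / b)),
    fun a haK x hx => ?_⟩
  obtain ⟨h₀, h₁⟩ := hKI haK
  have ha : 0 < a := ha₀.trans_le h₀
  rcases le_total x (1 / 2) with hx2 | hx2
  · calc Lf (betaWeight b) a x ≤ (2 ^ |b - 1|) ^ 2 * (1 / a + 4 / a ^ 2) * (1 + |log x|) :=
          Lf_betaWeight_le_of_le_half ha hb hx.1 hx2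
      _ ≤ _ := by gcongr; exact le_max_of_le_left (by gcongr)
  · have hψ : 0 ≤ -psi0 (betaWeight b) a := neg_nonneg.2 (psi0_betaWeight_nonpos ha hb)
    have hM : -psi0 (betaWeight b) a ≤ M := neg_psi0_betaWeight_le ha₀ h₀ h₁ hb
    have hM0 : 0 ≤ M := hψ.trans hM
    calc Lf (betaWeight b) a x ≤ 2 ^ a * (2 * -psi0 (betaWeight b) a / b) :=
          Lf_betaWeight_le_of_half_le ha hb hx2 hx.2
      _ ≤ 2 ^ a₁ * (2 * M / b) * 1 := by rw [mul_one]; gcongr; norm_num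
      _ ≤ _ := by gcongr; exacts [le_max_right _ _, le_add_of_nonneg_right (abs_nonneg _)]
end

section
/- Suppose the polymer model has the down-right property. Then for all (m,n) ∈ ℤ_+², E[log Z_{m,n}] = m E[log R^1] + n E[log R^2], and Var[log Z_{m,n}] = -m Var[log R^1] + n Var[log R^2] + 2 Cov(S_N, S_S), where S_N = Σ_{i=1}^m log R^1_{i,n} and S_S = Σ_{i=1}^m log R^1_{i,0}. -/
/-!
Writing `log Z` both as `S_E + S_S` and as `S_N + S_W` gives `S_E = S_N + S_W - S_S`, so
`Cov(S_E, S_S) = Cov(S_N, S_S) + Cov(S_W, S_S) - Var S_S`, where the middle term vanishes by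
independence of `S_S` and `S_W`. Substituting into
`Var(S_E + S_S) = Var S_E + 2 Cov(S_E, S_S) + Var S_S` gives the variance formula; the mean formula
is linearity of expectation for `S_N + S_W`.
-/

open MeasureTheory ProbabilityTheory

namespace ProbabilityTheory

variable {Ω : Type*} {mΩ : MeasurableSpace Ω} {μ : Measure Ω}

lemma covariance_eq_integral_of_integral_eq {X Y : Ω → ℝ} {a b : ℝ}
    (hX : ∫ ω, X ω ∂μ = a) (hY : ∫ ω, Y ω ∂μ = b) :
    cov[X, Y; μ] = ∫ ω, (X ω - a) * (Y ω - b) ∂μ := by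
  rw [covariance, hX, hY]

lemma variance_add_eq_of_add_eq_add [IsFiniteMeasure μ] {N W E S : Ω → ℝ}
    (hN : MemLp N 2 μ) (hW : MemLp W 2 μ) (hS : MemLp S 2 μ)
    (h : N + W = E + S) (hSW : S ⟂ᵢ[μ] W) :
    Var[E + S; μ] = Var[E; μ] - Var[S; μ] + 2 * cov[N, S; μ] := by
  have hE_eq : E = N + W - S := by rw [h, add_sub_cancel_right]
  have hE : MemLp E 2 μ := hE_eq ▸ (hN.add hW).sub hS
  have hcov : cov[E, S; μ] = cov[N, S; μ] - Var[S; μ] := by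
    rw [hE_eq, covariance_sub_left (hN.add hW) hS hS, covariance_add_left hN hW hS,
      covariance_comm W, hSW.covariance_eq_zero hS hW, covariance_self hS.aemeasurable, add_zero]
  rw [variance_add hE hS, hcov]
  ring

end ProbabilityTheory

theorem stmt_12_general
    {Ω : Type*} [MeasureSpace Ω] [IsProbabilityMeasure (volume : Measure Ω)]
    (m n : ℕ) (μ₁ μ₂ σ₁ σ₂ : ℝ)
    (SN SS SE SW logZ : Ω → ℝ)
    (hN2 : MemLp SN 2) (hS2 : MemLp SS 2) (hW2 : MemLp SW 2)
    (hNW : ∀ ω, logZ ω = SN ω + SW ω)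
    (hES : ∀ ω, logZ ω = SE ω + SS ω)
    (hindSW : IndepFun SS SW)
    (hESN : (∫ ω, SN ω) = m * μ₁) (hESS : (∫ ω, SS ω) = m * μ₁)
    (hESW : (∫ ω, SW ω) = n * μ₂)
    (hVS : variance SS volume = m * σ₁)
    (hVE : variance SE volume = n * σ₂) :
    (∫ ω, logZ ω) = m * μ₁ + n * μ₂ ∧
    variance logZ volume =
      -(m * σ₁) + n * σ₂ +
        2 * ∫ ω, (SN ω - m * μ₁) * (SS ω - m * μ₁) := by
  have hZ_NW : logZ = SN + SW := funext hNW
  have hZ_ES : logZ = SE + SS := funext hES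
  constructor
  · rw [hZ_NW, integral_add' (hN2.integrable one_le_two) (hW2.integrable one_le_two), hESN, hESW]
  · rw [hZ_ES, variance_add_eq_of_add_eq_add hN2 hW2 hS2 (hZ_NW.symm.trans hZ_ES) hindSW,
      hVE, hVS, covariance_eq_integral_of_integral_eq hESN hESS]
    ring

/-- under the down-right property (encoded by its consequences: the
decompositions `log Z = S_N + S_W = S_E + S_S`, the independence of `S_S, S_W` and of
`S_N, S_E`, and the marginal means/variances of the four boundary sums),
`E[log Z_{m,n}] = m E[log R¹] + n E[log R²]` and
`Var[log Z_{m,n}] = -m Var[log R¹] + n Var[log R²] + 2 Cov(S_N, S_S)`. -/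
theorem stmt_12
    {Ω : Type*} [MeasureSpace Ω] [IsProbabilityMeasure (volume : Measure Ω)]
    (m n : ℕ) (μ₁ μ₂ σ₁ σ₂ : ℝ)
    (SN SS SE SW logZ : Ω → ℝ)
    (hN2 : MemLp SN 2) (hS2 : MemLp SS 2) (hE2 : MemLp SE 2) (hW2 : MemLp SW 2)
    (hNW : ∀ ω, logZ ω = SN ω + SW ω)
    (hES : ∀ ω, logZ ω = SE ω + SS ω)
    (hindSW : IndepFun SS SW) (hindNE : IndepFun SN SE)
    (hESN : (∫ ω, SN ω) = m * μ₁) (hESS : (∫ ω, SS ω) = m * μ₁)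
    (hESE : (∫ ω, SE ω) = n * μ₂) (hESW : (∫ ω, SW ω) = n * μ₂)
    (hVN : variance SN volume = m * σ₁) (hVS : variance SS volume = m * σ₁)
    (hVE : variance SE volume = n * σ₂) (hVW : variance SW volume = n * σ₂) :
    (∫ ω, logZ ω) = m * μ₁ + n * μ₂ ∧
    variance logZ volume =
      -(m * σ₁) + n * σ₂ +
        2 * ∫ ω, (SN ω - m * μ₁) * (SS ω - m * μ₁) :=
  stmt_12_general m n μ₁ μ₂ σ₁ σ₂ SN SS SE SW logZ hN2 hS2 hW2 hNW hES hindSW hESN hESS hESW hVS hVE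
end
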